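/- arXiv:2111.11534 — 7 statements merged into one kernel-verified Lean document; each statement's English description precedes it below -/
import Mathlib

section
/- Let a, b, p, n₁, n₋₁, n, m be real numbers with a > b ≥ 0, a > 0, p > 1/2, m ≥ 0, and n₁ ≥ n₋₁ > (n+m)·b/2. Define, for u, v ∈ [0, m], the perturbed mean estimate M(u,v) = (n₁ − n₋₁ + u − v)·(a − b) / (a·(2p − 1)·(n₁ + n₋₁ + u + v − (n+m)·b)). Then for all u, v ∈ [0, m], M(u,v) ≤ M(m, 0); i.e., the choice u = m, v = 0 (all m fake users supporting value 1 for the target key) maximizes the estimated mean value of the single target key. -/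
/-- Optimality of M2GA for the mean gain with a single target key:
the choice `u = m, v = 0` maximizes the perturbed mean estimate. -/
theorem m2ga_mean_optimal (a b p n₁ nm₁ n m : ℝ)
    (hab : a > b) (hb : b ≥ 0) (ha : a > 0) (hp : p > 1/2) (hm : m ≥ 0)
    (hcnt : n₁ ≥ nm₁) (hcnt2 : nm₁ > (n + m) * b / 2) :
    ∀ u v : ℝ, 0 ≤ u → u ≤ m → 0 ≤ v → v ≤ m →
      (n₁ - nm₁ + u - v) * (a - b) /
        (a * (2 * p - 1) * (n₁ + nm₁ + u + v - (n + m) * b)) ≤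
      (n₁ - nm₁ + m - 0) * (a - b) /
        (a * (2 * p - 1) * (n₁ + nm₁ + m + 0 - (n + m) * b)) := by
  intro u v hu hum hv hvm
  have hS : n₁ + nm₁ - (n + m) * b > 0 := by linarith
  have hc : a * (2 * p - 1) > 0 := by apply mul_pos ha; linarith
  have hd1 : a * (2 * p - 1) * (n₁ + nm₁ + u + v - (n + m) * b) > 0 := by
    apply mul_pos hc; linarith
  have hd2 : a * (2 * p - 1) * (n₁ + nm₁ + m + 0 - (n + m) * b) > 0 := by
    apply mul_pos hc; linarith
  rw [div_le_div_iff₀ hd1 hd2]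
  have key : (n₁ - nm₁ + u - v) * (n₁ + nm₁ + m - (n + m) * b) ≤
      (n₁ - nm₁ + m) * (n₁ + nm₁ + u + v - (n + m) * b) := by
    nlinarith [mul_nonneg hv hm, mul_nonneg hv hS.le,
      mul_nonneg (sub_nonneg.2 hum) (by linarith : (0:ℝ) ≤ 2 * nm₁ - (n + m) * b),
      mul_nonneg hv (by linarith : (0:ℝ) ≤ 2 * nm₁ - (n + m) * b)]
  nlinarith [mul_le_mul_of_nonneg_left key (mul_pos hc (by linarith : a - b > 0)).le]
end

section
/- Let ε, n, m, r, f_T be real numbers with ε > 0, n > 0, m > 0, and set β = m/n. Then (m·e^{ε/2}/(e^{ε/2} + 1))·(e^{ε/2} + 1)/((n + m)(e^{ε/2} − 1)) − (m/(n + m))·(f_T + r/(e^{ε/2} − 1)) = (β/(1 + β))·(1 − f_T + (1 − r)/(e^{ε/2} − 1)). That is, the expected frequency gain of RKVA against PrivKVM equals (β/(1+β))·[1 − f_T + (1 − r)/(e^{ε/2} − 1)]. -/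
open Real in
/-- Expected frequency gain of RKVA against PrivKVM. -/
theorem rkva_privkvm_freq_gain (ε n m r fT : ℝ)
    (hε : ε > 0) (hn : n > 0) (hm : m > 0) (β : ℝ) (hβ : β = m / n) :
    (m * exp (ε / 2) / (exp (ε / 2) + 1)) * (exp (ε / 2) + 1) /
        ((n + m) * (exp (ε / 2) - 1)) -
      (m / (n + m)) * (fT + r / (exp (ε / 2) - 1)) =
    (β / (1 + β)) * (1 - fT + (1 - r) / (exp (ε / 2) - 1)) := by
  have h1 : exp (ε / 2) > 1 := by
    have := Real.exp_lt_exp.mpr (show (0:ℝ) < ε / 2 by linarith)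
    simpa using this
  have h2 : exp (ε / 2) - 1 ≠ 0 := by linarith
  have h3 : exp (ε / 2) + 1 ≠ 0 := by positivity
  have h4 : n + m ≠ 0 := by positivity
  subst hβ
  have h5 : (1 : ℝ) + m / n ≠ 0 := by positivity
  field_simp
  ring
end

section
/- Let ε, n, m, r, ℓ, d′, f_T be real numbers with ε > 0, n > 0, m > 0, ℓ > 0, d′ > 0, and set β = m/n. Then (m·r/d′)·ℓ·(ℓ(e^{ε} − 1) + 2d′)/((n + m)·ℓ·(e^{ε} − 1)) − (m·ℓ/(n + m))·(f_T + (2/(ℓ(e^{ε} − 1)))·r) = β·(r − f_T·d′)·ℓ/((1 + β)·d′). That is, the expected frequency gain of RMA against PCKV-GRR equals β(r − f_T d′)ℓ/((1+β)d′). -/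
open Real in
/-- Expected frequency gain of RMA against PCKV-GRR. -/
theorem rma_pckvgrr_freq_gain (ε n m r ℓ d' fT : ℝ)
    (hε : ε > 0) (hn : n > 0) (hm : m > 0) (hℓ : ℓ > 0) (hd : d' > 0)
    (β : ℝ) (hβ : β = m / n) :
    (m * r / d') * ℓ * (ℓ * (exp ε - 1) + 2 * d') / ((n + m) * ℓ * (exp ε - 1)) -
      (m * ℓ / (n + m)) * (fT + (2 / (ℓ * (exp ε - 1))) * r) =
    β * (r - fT * d') * ℓ / ((1 + β) * d') := by
  have he : exp ε - 1 > 0 := by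
    linarith [Real.exp_pos ε, Real.add_one_lt_exp (ne_of_gt hε)]
  have hnm : n + m > 0 := by linarith
  subst hβ
  have h1 : 1 + m / n > 0 := by positivity
  field_simp
  ring
end

section
/- Let a, b, p, n, m, r, ℓ, f, μ be real numbers with a > b > 0, p > 1/2, n > 0, m > 0, r > 0, ℓ > 0, f > 0, and set β = m/n. Suppose the fake users' expected support counts are E[ñ₁] = (m·a·p + m(r−1)·b/2)/r and E[ñ₋₁] = (m·a·(1−p) + m(r−1)·b/2)/r. Then ((a − b)/(a(2p − 1))) · ( n·f·a(2p−1)·μ/ℓ + m·a·(2p−1)/r ) / ( n·f·(a − b)/ℓ + (m·a + m(r−1)·b)/r − m·b ) = ( f·μ·r + β·ℓ ) / ( f·r + β·ℓ ). That is, the approximate mean gain of RKVA against PCKV-UE and PCKV-GRR for a target key with true frequency f and true mean μ equals (fμr + βℓ)/(fr + βℓ) − μ, independently of a, b, p. -/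
/-- Approximate mean gain of RKVA against PCKV-UE and PCKV-GRR (per target key). -/
theorem rkva_pckv_mean_gain (a b p n m r ℓ f μ : ℝ)
    (hab : a > b) (hb : b > 0) (hp : p > 1/2) (hn : n > 0) (hm : m > 0)
    (hr : r > 0) (hℓ : ℓ > 0) (hf : f > 0) (β : ℝ) (hβ : β = m / n) :
    ((a - b) / (a * (2 * p - 1))) *
        ((n * f * a * (2 * p - 1) * μ / ℓ + m * a * (2 * p - 1) / r) /
          (n * f * (a - b) / ℓ + (m * a + m * (r - 1) * b) / r - m * b)) =
      (f * μ * r + β * ℓ) / (f * r + β * ℓ) := by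
  subst hβ
  have hab' : a - b > 0 := by linarith
  have ha : a > 0 := by linarith
  have hp' : 2 * p - 1 > 0 := by linarith
  have key : n * f * (a - b) / ℓ + (m * a + m * (r - 1) * b) / r - m * b
      = n * f * (a - b) / ℓ + m * (a - b) / r := by
    field_simp; ring
  have hd1 : n * f * (a - b) / ℓ + (m * a + m * (r - 1) * b) / r - m * b > 0 := by
    rw [key]; positivity
  have hd2 : f * r + m / n * ℓ > 0 := by positivity
  rw [key] at hd1 ⊢
  have h1 : n * f * (a - b) / ℓ + m * (a - b) / r
      = (a - b) * ((n * f * r + m * ℓ) / (ℓ * r)) := by field_simp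
  have h2 : n * f * a * (2 * p - 1) * μ / ℓ + m * a * (2 * p - 1) / r
      = a * (2 * p - 1) * ((n * f * r * μ + m * ℓ) / (ℓ * r)) := by field_simp
  rw [h1, h2]
  have hnum : n * f * r + m * ℓ > 0 := by positivity
  have hx : (n * f * r + m * ℓ) / (ℓ * r) > 0 := by positivity
  rw [div_mul_div_comm]
  rw [div_eq_div_iff (by positivity) (by positivity)]
  field_simp
end

section
/- Let ε₁, ε₂, n, m, r, f, μ be real numbers with ε₁ > 0, ε₂ > 0, n > 0, m > 0, r > 0, f > 0, and set β = m/n. Suppose the fake users' expected support counts are E[ñ₁] = m·e^{ε₁}·e^{ε₂}/(r(e^{ε₁}+1)(1+e^{ε₂})) and E[ñ₋₁] = m·e^{ε₁}/(r(e^{ε₁}+1)(1+e^{ε₂})). Then ((e^{ε₂}+1)/(e^{ε₂}−1)) · ( n·f·((e^{ε₂}−1)/(e^{ε₂}+1))·μ + E[ñ₁] − E[ñ₋₁] ) / ( n·f + E[ñ₁] + E[ñ₋₁] ) = ( f·μ·r·(e^{ε₁}+1) + β·e^{ε₁} ) / ( f·r·(e^{ε₁}+1) + β·e^{ε₁} ).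 That is, the approximate mean gain of RKVA against PrivKVM for a target key with true frequency f and true mean μ equals [fμr(e^{ε₁}+1) + βe^{ε₁}]/[fr(e^{ε₁}+1) + βe^{ε₁}] − μ. -/
open Real in
/-- Approximate mean gain of RKVA against PrivKVM (per target key). -/
theorem rkva_privkvm_mean_gain (ε₁ ε₂ n m r f μ : ℝ)
    (hε₁ : ε₁ > 0) (hε₂ : ε₂ > 0) (hn : n > 0) (hm : m > 0) (hr : r > 0)
    (hf : f > 0) (β En₁ Enm₁ : ℝ) (hβ : β = m / n)
    (hE1 : En₁ = m * exp ε₁ * exp ε₂ / (r * (exp ε₁ + 1) * (1 + exp ε₂)))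
    (hE2 : Enm₁ = m * exp ε₁ / (r * (exp ε₁ + 1) * (1 + exp ε₂))) :
    ((exp ε₂ + 1) / (exp ε₂ - 1)) *
        ((n * f * ((exp ε₂ - 1) / (exp ε₂ + 1)) * μ + En₁ - Enm₁) /
          (n * f + En₁ + Enm₁)) =
      (f * μ * r * (exp ε₁ + 1) + β * exp ε₁) /
        (f * r * (exp ε₁ + 1) + β * exp ε₁) := by
  have h1 : exp ε₂ > 1 := by
    have := exp_lt_exp.mpr hε₂; simpa using this
  have he1 : exp ε₁ > 0 := exp_pos _
  have he2 : exp ε₂ > 0 := exp_pos _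
  have hd1 : exp ε₂ - 1 ≠ 0 := by linarith
  have hd2 : exp ε₂ + 1 ≠ 0 := by linarith
  have hd3 : exp ε₁ + 1 ≠ 0 := by linarith
  have h1e : 1 + exp ε₂ ≠ 0 := by linarith
  have hden : n * f + En₁ + Enm₁ > 0 := by
    have : En₁ > 0 := by
      rw [hE1]; positivity
    have h2 : Enm₁ > 0 := by
      rw [hE2]; positivity
    nlinarith [mul_pos hn hf]
  have hden2 : f * r * (exp ε₁ + 1) + β * exp ε₁ > 0 := by
    rw [hβ]
    have : m / n > 0 := by positivity
    nlinarith [mul_pos (mul_pos hf hr) (by linarith : exp ε₁ + 1 > 0)]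
  subst hβ hE1 hE2
  field_simp at *
  ring
end

section
/- Let β > 0, f_T, and r be real numbers, and define G(ε) = (β/(1+β))·(1 − f_T + (2 − r)/(e^{ε/2} − 1)) for ε > 0 (the expected frequency gain of M2GA against PrivKVM). Then for all 0 < ε₁ < ε₂: (i) if r < 2 then G(ε₁) > G(ε₂) (the gain strictly increases as the privacy budget decreases, i.e., stronger privacy makes the protocol more vulnerable); (ii) if r = 2 then G(ε₁) = G(ε₂) (the gain is independent of the privacy budget); (iii) if r > 2 then G(ε₁) < G(ε₂) (the gain strictly decreases as the privacy budget decreases). -/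
open Real in
/-- Security–privacy trade-off for the frequency gain of M2GA against PrivKVM
depends on the number `r` of target keys. -/
theorem m2ga_privkvm_freq_gain_privacy_tradeoff (β fT r : ℝ) (hβ : β > 0)
    (G : ℝ → ℝ)
    (hG : ∀ ε > 0, G ε = (β / (1 + β)) * (1 - fT + (2 - r) / (exp (ε / 2) - 1))) :
    ∀ ε₁ ε₂ : ℝ, 0 < ε₁ → ε₁ < ε₂ →
      (r < 2 → G ε₁ > G ε₂) ∧ (r = 2 → G ε₁ = G ε₂) ∧ (r > 2 → G ε₁ < G ε₂) := by
  intro ε₁ ε₂ h1 h12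
  have h2 : 0 < ε₂ := h1.trans h12
  rw [hG ε₁ h1, hG ε₂ h2]
  have e1 : (0:ℝ) < exp (ε₁ / 2) - 1 := by
    nlinarith [Real.add_one_lt_exp (show ε₁ / 2 ≠ 0 by positivity), h1]
  have e2 : (0:ℝ) < exp (ε₂ / 2) - 1 := by
    nlinarith [Real.add_one_lt_exp (show ε₂ / 2 ≠ 0 by positivity), h2]
  have elt : exp (ε₁ / 2) - 1 < exp (ε₂ / 2) - 1 := by
    have : exp (ε₁ / 2) < exp (ε₂ / 2) := Real.exp_lt_exp.mpr (by linarith)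
    linarith
  have hinv : 1 / (exp (ε₂ / 2) - 1) < 1 / (exp (ε₁ / 2) - 1) :=
    one_div_lt_one_div_of_lt e1 elt
  have hc : 0 < β / (1 + β) := by positivity
  refine ⟨?_, ?_, ?_⟩
  · intro hr
    have h2r : 0 < 2 - r := by linarith
    have : (2 - r) / (exp (ε₂ / 2) - 1) < (2 - r) / (exp (ε₁ / 2) - 1) := by
      rw [div_lt_div_iff₀ e2 e1]; nlinarith
    nlinarith
  · intro hr; rw [hr]; ring_nf
  · intro hr
    have h2r : 2 - r < 0 := by linarith
    have : (2 - r) / (exp (ε₁ / 2) - 1) < (2 - r) / (exp (ε₂ / 2) - 1) := by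
      rw [div_lt_div_iff₀ e1 e2]; nlinarith
    nlinarith
end

section
/- Let β > 0, f > 0, r > 0, and μ be real numbers, and define G(ε₂) = ( f·μ·r + β·(e^{ε₂} + 1)/(e^{ε₂} − 1) ) / ( f·r + β ) − μ for ε₂ > 0 (the approximate mean gain of M2GA against PrivKVM for a target key of true frequency f and true mean μ). Then G is strictly decreasing on (0, ∞): for all 0 < ε₂ < ε₂′, G(ε₂) > G(ε₂′). In other words, the approximate mean gain of M2GA against PrivKVM strictly increases as the per-round privacy budget ε₂ decreases. -/
open Real in
/-- The approximate mean gain of M2GA against PrivKVM strictly decreases in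
the per-round privacy budget `ε₂`. -/
theorem m2ga_privkvm_mean_gain_decreasing (β f r μ : ℝ)
    (hβ : β > 0) (hf : f > 0) (hr : r > 0) (G : ℝ → ℝ)
    (hG : ∀ ε₂ > 0, G ε₂ =
      (f * μ * r + β * (exp ε₂ + 1) / (exp ε₂ - 1)) / (f * r + β) - μ) :
    ∀ ε₂ ε₂' : ℝ, 0 < ε₂ → ε₂ < ε₂' → G ε₂ > G ε₂' := by
  intro x y hx hxy
  have hy : 0 < y := hx.trans hxy
  rw [hG x hx, hG y hy]
  have hd : (0:ℝ) < f * r + β := by positivity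
  have hex : (1:ℝ) < Real.exp x := by
    rw [← Real.exp_zero]; exact Real.exp_lt_exp.mpr hx
  have hey : Real.exp x < Real.exp y := Real.exp_lt_exp.mpr hxy
  have hx1 : (0:ℝ) < Real.exp x - 1 := by linarith
  have hy1 : (0:ℝ) < Real.exp y - 1 := by linarith
  have key : (Real.exp y + 1) / (Real.exp y - 1) <
      (Real.exp x + 1) / (Real.exp x - 1) := by
    rw [div_lt_div_iff₀ hy1 hx1]; nlinarith
  have : β * (Real.exp y + 1) / (Real.exp y - 1) <
      β * (Real.exp x + 1) / (Real.exp x - 1) := by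
    rw [mul_div_assoc, mul_div_assoc]
    exact mul_lt_mul_of_pos_left key hβ
  have h2 : f * μ * r + β * (Real.exp y + 1) / (Real.exp y - 1) <
      f * μ * r + β * (Real.exp x + 1) / (Real.exp x - 1) := by linarith
  have h3 := div_lt_div_of_pos_right h2 hd
  linarith
end
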